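/- Let m ≥ 3, n ≥ 4, n ≥ m, and ω = e^{2πi/(n−2)}. The states S_j = (1/√2)(|j⟩ − |j+1 mod m⟩) ⊗ |j⟩ (0 ≤ j ≤ m−1), L_{jk} = |j⟩ ⊗ (1/√(n−2))(Σ_{i=0}^{m−3} ω^{ik}|i+j+1 mod m⟩ + Σ_{i=m−2}^{n−3} ω^{ik}|i+2⟩) (0 ≤ j ≤ m−1, 1 ≤ k ≤ n−3), and F = (1/√(nm)) Σ_{i=0}^{m−1} Σ_{j=0}^{n−1} |i⟩ ⊗ |j⟩ form a set of mn − 2m + 1 mutually orthogonal unit product vectors in ℂᵐ ⊗ ℂⁿ. -/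

import Mathlib

open Finset

/-- ω = e^{2πi/(n−2)}. -/
noncomputable def gt2ω (n : ℕ) : ℂ := Complex.exp (2 * Real.pi * Complex.I / ((n : ℂ) - 2))

/-- Short tile state S_j = (1/√2)(|j⟩ − |j+1 mod m⟩) ⊗ |j⟩ in ℂᵐ ⊗ ℂⁿ. -/
noncomputable def gt2S (m n j : ℕ) : EuclideanSpace ℂ (Fin m × Fin n) :=
  WithLp.toLp 2 fun p : Fin m × Fin n => (1 / (Real.sqrt 2 : ℂ)) *
    ((if (p.1 : ℕ) = j % m then 1 else 0) - (if (p.1 : ℕ) = (j + 1) % m then 1 else 0)) *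
    (if (p.2 : ℕ) = j then 1 else 0)

/-- Long tile state
L_{jk} = |j⟩ ⊗ (1/√(n−2))(Σ_{i=0}^{m−3} ω^{ik}|i+j+1 mod m⟩ + Σ_{i=m−2}^{n−3} ω^{ik}|i+2⟩). -/
noncomputable def gt2L (m n j k : ℕ) : EuclideanSpace ℂ (Fin m × Fin n) :=
  WithLp.toLp 2 fun p : Fin m × Fin n => (if (p.1 : ℕ) = j % m then 1 else 0) * (1 / (Real.sqrt ((n : ℝ) - 2) : ℂ)) *
    ((∑ i ∈ range (m - 2), if (p.2 : ℕ) = (i + j + 1) % m then gt2ω n ^ (i * k) else 0) +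
     (∑ i ∈ Ico (m - 2) (n - 2), if (p.2 : ℕ) = i + 2 then gt2ω n ^ (i * k) else 0))

/-- The stopper F = (1/√(nm)) Σ_{i,j} |i⟩ ⊗ |j⟩. -/
noncomputable def gt2F (m n : ℕ) : EuclideanSpace ℂ (Fin m × Fin n) :=
  WithLp.toLp 2 fun _ : Fin m × Fin n => 1 / (Real.sqrt ((n : ℝ) * m) : ℂ)

/-- Index type for GenTiles2: short tiles (0 ≤ j ≤ m−1), long tiles
(0 ≤ j ≤ m−1, 1 ≤ k ≤ n−3), and the stopper; mn − 2m + 1 states in all. -/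
abbrev GT2Index (m n : ℕ) := Fin m ⊕ ((Fin m × Fin (n - 3)) ⊕ Unit)

/-- The GenTiles2 family in ℂᵐ ⊗ ℂⁿ. -/
noncomputable def gt2 (m n : ℕ) : GT2Index m n → EuclideanSpace ℂ (Fin m × Fin n)
  | Sum.inl j => gt2S m n (j : ℕ)
  | Sum.inr (Sum.inl (j, k)) => gt2L m n (j : ℕ) ((k : ℕ) + 1)
  | Sum.inr (Sum.inr _) => gt2F m n

/-!
Each state is a product vector `x ⊗ y`, and `⟪x ⊗ y, x' ⊗ y'⟫ = ⟪x, x'⟫ ⟪y, y'⟫`, so two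
distinct states are orthogonal as soon as one pair of factors is. The second factor of `L_{jk}` is
the discrete Fourier vector `(ω^{ik})_{i < n-2}` spread over `n - 2` distinct basis vectors of
`ℂⁿ`; orthogonality of the characters of `ℤ/(n-2)` separates `L_{jk}` from `L_{jk'}` and, using
the trivial character, from the stopper `F`. The states `S_j` and `L_{j'k}` are separated in the
first factor unless `j' ∈ {j, j + 1}`, and then `|j⟩` is not among the basis vectors of `L_{j'k}`.
-/

open scoped ComplexConjugate

theorem Nat.mod_eq_self_or_sub_of_lt_two_mul {a m : ℕ} (ha : a < 2 * m) :
    a % m = a ∨ (m ≤ a ∧ a % m = a - m) := by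
  rcases Nat.lt_or_ge a m with h | h
  · exact .inl (Nat.mod_eq_of_lt h)
  · exact .inr ⟨h, by rw [Nat.mod_eq_sub_mod h, Nat.mod_eq_of_lt (by omega)]⟩

theorem val_finRotate {m : ℕ} (j : Fin m) : (finRotate m j : ℕ) = (j + 1) % m := by
  have := j.neZero
  rw [finRotate_apply, Fin.val_add, Fin.val_one', Nat.add_mod_mod]

theorem finRotate_ne_self {m : ℕ} (hm : 1 < m) (j : Fin m) : finRotate m j ≠ j := by
  rw [Ne, Fin.ext_iff, val_finRotate]
  rcases Nat.lt_or_ge ((j : ℕ) + 1) m with h | h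
  · rw [Nat.mod_eq_of_lt h]; omega
  · rw [show (j : ℕ) + 1 = m by omega, Nat.mod_self]; omega

theorem IsPrimitiveRoot.sum_conj_pow_mul_pow {ζ : ℂ} {N : ℕ} (hζ : IsPrimitiveRoot ζ N)
    {k k' : ℕ} (hk : k < N) (hk' : k' < N) :
    ∑ i ∈ Finset.range N, conj (ζ ^ (i * k)) * ζ ^ (i * k') = if k = k' then (N : ℂ) else 0 := by
  have hunit : conj (ζ ^ k) * ζ ^ k = 1 := by
    rw [Complex.conj_mul', norm_pow, hζ.norm'_eq_one (by omega)]; simp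
  have hterm : ∀ i, conj (ζ ^ (i * k)) * ζ ^ (i * k') = (conj (ζ ^ k) * ζ ^ k') ^ i := fun i => by
    rw [mul_comm i, mul_comm i, pow_mul, pow_mul, map_pow, mul_pow]
  rw [Finset.sum_congr rfl fun i _ => hterm i]
  split_ifs with hkk
  · subst hkk
    simp only [hunit, one_pow, Finset.sum_const, Finset.card_range, nsmul_eq_mul, mul_one]
  · have hη : conj (ζ ^ k) * ζ ^ k' ≠ 1 := fun h => hkk <| hζ.pow_inj hk hk' <| by
      rw [← one_mul (ζ ^ k), ← h, mul_right_comm, hunit, one_mul]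
    have hηN : (conj (ζ ^ k) * ζ ^ k') ^ N = 1 := by
      rw [mul_pow, ← map_pow, ← pow_mul, ← pow_mul, mul_comm k, mul_comm k', pow_mul, pow_mul,
        hζ.pow_eq_one]
      simp
    rw [geom_sum_eq hη, hηN, sub_self, zero_div]

namespace EuclideanSpace

variable {𝕜 ι κ : Type*} [RCLike 𝕜] [Fintype ι] [Fintype κ]

/-- The product vector `x ⊗ y`, under the identification `𝕜^ι ⊗ 𝕜^κ ≅ 𝕜^(ι × κ)`. -/
noncomputable def tmul (x : EuclideanSpace 𝕜 ι) (y : EuclideanSpace 𝕜 κ) :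
    EuclideanSpace 𝕜 (ι × κ) :=
  WithLp.toLp 2 fun p => x p.1 * y p.2

theorem inner_tmul (x x' : EuclideanSpace 𝕜 ι) (y y' : EuclideanSpace 𝕜 κ) :
    inner 𝕜 (tmul x y) (tmul x' y') = inner 𝕜 x x' * inner 𝕜 y y' := by
  simp only [tmul, PiLp.inner_apply, RCLike.inner_apply, Fintype.sum_prod_type, map_mul,
    Finset.sum_mul_sum]
  exact Finset.sum_congr rfl fun _ _ => Finset.sum_congr rfl fun _ _ => by ring

theorem norm_tmul (x : EuclideanSpace 𝕜 ι) (y : EuclideanSpace 𝕜 κ) :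
    ‖tmul x y‖ = ‖x‖ * ‖y‖ := by
  refine (sq_eq_sq₀ (norm_nonneg _) (by positivity)).mp (RCLike.ofReal_injective (K := 𝕜) ?_)
  push_cast
  rw [mul_pow, ← inner_self_eq_norm_sq_to_K, ← inner_self_eq_norm_sq_to_K,
    ← inner_self_eq_norm_sq_to_K, inner_tmul]

theorem norm_smul_sub_single [DecidableEq ι] {i i' : ι} (h : i ≠ i') :
    ‖(1 / (Real.sqrt 2 : ℂ)) • (single i (1 : ℂ) - single i' 1)‖ = 1 := by
  have hsub : ‖single i (1 : ℂ) - single i' 1‖ ^ 2 = 2 := by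
    rw [@norm_sub_sq ℂ, inner_single_left, PiLp.single_apply, if_neg h]
    norm_num
  rw [norm_smul, show ‖single i (1 : ℂ) - single i' 1‖ = Real.sqrt 2 by
    rw [← hsub, Real.sqrt_sq (norm_nonneg _)]]
  simp only [one_div, norm_inv, Complex.norm_real, Real.norm_eq_abs,
    abs_of_nonneg (Real.sqrt_nonneg 2)]
  exact inv_mul_cancel₀ (by positivity)

end EuclideanSpace

open EuclideanSpace

section GenTiles2

variable {m n : ℕ}

theorem isPrimitiveRoot_gt2ω (hn : 2 < n) : IsPrimitiveRoot (gt2ω n) (n - 2) := by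
  have h : ((n - 2 : ℕ) : ℂ) = (n : ℂ) - 2 := by push_cast [Nat.cast_sub hn.le]; ring
  rw [gt2ω, ← h]
  exact Complex.isPrimitiveRoot_exp _ (by omega)

/-- The basis vector of `ℂⁿ` that carries the coefficient `ω^{ik}` in `L_{jk}`. -/
def longTilePos (hmn : m ≤ n) (j : ℕ) (i : Fin (n - 2)) : Fin n :=
  if h : (i : ℕ) < m - 2 then ⟨((i : ℕ) + j + 1) % m, (Nat.mod_lt _ (by omega)).trans_le hmn⟩
  else ⟨i + 2, by omega⟩

theorem val_longTilePos (hmn : m ≤ n) (j : ℕ) (i : Fin (n - 2)) :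
    (longTilePos hmn j i : ℕ) = if (i : ℕ) < m - 2 then ((i : ℕ) + j + 1) % m else i + 2 := by
  unfold longTilePos; split_ifs <;> rfl

theorem longTilePos_injective (hmn : m ≤ n) (j : ℕ) :
    Function.Injective (longTilePos hmn j) := by
  intro i i' h
  rw [Fin.ext_iff, val_longTilePos, val_longTilePos] at h
  split_ifs at h with hi hi' hi'
  · have h' : (i : ℕ) % m = (i' : ℕ) % m :=
      Nat.ModEq.add_right_cancel' (j + 1) (by simpa only [Nat.ModEq, ← add_assoc] using h)
    rwa [Nat.mod_eq_of_lt (by omega), Nat.mod_eq_of_lt (by omega), ← Fin.ext_iff] at h'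
  · have := Nat.mod_lt ((i : ℕ) + j + 1) (by omega : 0 < m); omega
  · have := Nat.mod_lt ((i' : ℕ) + j + 1) (by omega : 0 < m); omega
  · exact Fin.ext (by omega)

/-- For `i < m - 2` the positions `i + j' + 1 mod m` miss exactly `j'` and `j' - 1 mod m`. -/
theorem longTilePos_ne_castLE (hmn : m ≤ n) {j j' : Fin m} (hj : j' = j ∨ j' = finRotate m j)
    (i : Fin (n - 2)) : longTilePos hmn j' i ≠ Fin.castLE hmn j := by
  rw [Ne, Fin.ext_iff, val_longTilePos, Fin.val_castLE]
  split_ifs with hi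
  · have hj' : (j' : ℕ) = j ∨ (j' : ℕ) = (j + 1) % m := by
      rcases hj with rfl | rfl
      exacts [.inl rfl, .inr (val_finRotate j)]
    have := Nat.mod_eq_self_or_sub_of_lt_two_mul (a := (j : ℕ) + 1) (m := m) (by omega)
    have := Nat.mod_eq_self_or_sub_of_lt_two_mul (a := (i : ℕ) + j' + 1) (m := m) (by omega)
    omega
  · omega

noncomputable def longTileVec (hmn : m ≤ n) (j k : ℕ) : EuclideanSpace ℂ (Fin n) :=
  ∑ i : Fin (n - 2), gt2ω n ^ ((i : ℕ) * k) • single (longTilePos hmn j i) 1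

theorem longTileVec_apply (hmn : m ≤ n) (j k : ℕ) (y : Fin n) :
    longTileVec hmn j k y =
      (∑ i ∈ range (m - 2), if (y : ℕ) = (i + j + 1) % m then gt2ω n ^ (i * k) else 0) +
      ∑ i ∈ Ico (m - 2) (n - 2), if (y : ℕ) = i + 2 then gt2ω n ^ (i * k) else 0 := by
  simp only [longTileVec, WithLp.ofLp_sum, Finset.sum_apply, PiLp.smul_apply, PiLp.single_apply,
    Fin.ext_iff, val_longTilePos, smul_eq_mul, mul_ite, mul_one, mul_zero]
  rw [Fin.sum_univ_eq_sum_range (fun i => if (y : ℕ) = if i < m - 2 then (i + j + 1) % m else i + 2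
    then gt2ω n ^ (i * k) else 0), ← sum_range_add_sum_Ico _ (by omega : m - 2 ≤ n - 2)]
  congr 1
  · exact sum_congr rfl fun i hi => by rw [if_pos (mem_range.mp hi)]
  · exact sum_congr rfl fun i hi => by rw [if_neg (not_lt.mpr (mem_Ico.mp hi).1)]

theorem inner_longTileVec (hn : 2 < n) (hmn : m ≤ n) (j : ℕ) {k k' : ℕ} (hk : k < n - 2)
    (hk' : k' < n - 2) :
    inner ℂ (longTileVec hmn j k) (longTileVec hmn j k') =
      if k = k' then ((n - 2 : ℕ) : ℂ) else 0 := by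
  have hON := (orthonormal_single (𝕜 := ℂ)).comp _ (longTilePos_injective hmn j)
  rw [← (isPrimitiveRoot_gt2ω hn).sum_conj_pow_mul_pow hk hk', ← Fin.sum_univ_eq_sum_range]
  exact hON.inner_sum _ _ _

theorem inner_ones_longTileVec (hn : 2 < n) (hmn : m ≤ n) (j : ℕ) {k : ℕ} (hk0 : 0 < k)
    (hk : k < n - 2) : inner ℂ (WithLp.toLp 2 fun _ => (1 : ℂ)) (longTileVec hmn j k) = 0 := by
  have h := (isPrimitiveRoot_gt2ω hn).sum_conj_pow_mul_pow (k := 0) (by omega) hk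
  rw [if_neg hk0.ne, ← Fin.sum_univ_eq_sum_range] at h
  simpa [longTileVec, inner_sum, inner_smul_right, inner_single_right] using h

theorem norm_smul_longTileVec (hn : 2 < n) (hmn : m ≤ n) (j : ℕ) {k : ℕ} (hk : k < n - 2) :
    ‖(1 / (Real.sqrt ((n : ℝ) - 2) : ℂ)) • longTileVec hmn j k‖ = 1 := by
  have h := inner_longTileVec hn hmn j hk hk
  rw [if_pos rfl, inner_self_eq_norm_sq_to_K] at h
  have hsq : ‖longTileVec hmn j k‖ ^ 2 = (n : ℝ) - 2 := by
    have hN : ((n - 2 : ℕ) : ℝ) = n - 2 := by push_cast [Nat.cast_sub hn.le]; ring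
    rw [← hN]
    exact RCLike.ofReal_injective (K := ℂ) (by simpa using h)
  have hpos : 0 < (n : ℝ) - 2 := by
    rw [sub_pos]; exact_mod_cast hn
  rw [norm_smul, ← Real.sqrt_sq (norm_nonneg (longTileVec hmn j k)), hsq]
  simp [abs_of_nonneg, hpos.ne', hpos.le]

theorem gt2S_eq_tmul (hmn : m ≤ n) (j : Fin m) :
    gt2S m n j = tmul ((1 / (Real.sqrt 2 : ℂ)) • (single j 1 - single (finRotate m j) 1))
      (single (Fin.castLE hmn j) 1) := by
  ext p
  simp only [gt2S, tmul, PiLp.smul_apply, PiLp.sub_apply, PiLp.single_apply, Fin.ext_iff,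
    val_finRotate, Fin.val_castLE, Nat.mod_eq_of_lt j.isLt, smul_eq_mul]

theorem gt2L_eq_tmul (hmn : m ≤ n) (j : Fin m) (k : ℕ) :
    gt2L m n j k = tmul (single j 1)
      ((1 / (Real.sqrt ((n : ℝ) - 2) : ℂ)) • longTileVec hmn j k) := by
  ext p
  simp only [gt2L, tmul, longTileVec_apply, PiLp.smul_apply, PiLp.single_apply, Fin.ext_iff,
    Nat.mod_eq_of_lt j.isLt, smul_eq_mul, mul_assoc]

theorem gt2F_eq_tmul :
    gt2F m n = tmul (WithLp.toLp 2 fun _ => 1 / (Real.sqrt ((n : ℝ) * m) : ℂ))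
      (WithLp.toLp 2 fun _ => 1) := by
  ext p
  simp [gt2F, tmul]

theorem inner_gt2S_gt2S (hmn : m ≤ n) {j j' : Fin m} (h : j ≠ j') :
    inner ℂ (gt2S m n j) (gt2S m n j') = 0 := by
  rw [gt2S_eq_tmul hmn, gt2S_eq_tmul hmn, inner_tmul, inner_single_left, PiLp.single_apply,
    if_neg ((Fin.castLE_injective hmn).ne h), mul_zero, mul_zero]

theorem inner_gt2S_gt2L (hmn : m ≤ n) (j j' : Fin m) (k : ℕ) :
    inner ℂ (gt2S m n j) (gt2L m n j' k) = 0 := by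
  rw [gt2S_eq_tmul hmn, gt2L_eq_tmul hmn, inner_tmul]
  by_cases hj : j' = j ∨ j' = finRotate m j
  · apply mul_eq_zero_of_right
    have hne := fun i => (longTilePos_ne_castLE hmn hj i).symm
    simp [longTileVec, inner_smul_right, inner_sum, inner_single_left, hne]
  · apply mul_eq_zero_of_left
    rw [not_or] at hj
    simp only [inner_smul_left, inner_sub_left, inner_single_left, PiLp.single_apply,
      if_neg (Ne.symm hj.1), if_neg (Ne.symm hj.2), sub_self, mul_zero]

theorem inner_gt2S_gt2F (hmn : m ≤ n) (j : Fin m) : inner ℂ (gt2S m n j) (gt2F m n) = 0 := by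
  rw [gt2S_eq_tmul hmn, gt2F_eq_tmul, inner_tmul]
  simp [inner_smul_left, inner_sub_left, inner_single_left]

theorem inner_gt2L_gt2L (hmn : m ≤ n) {j j' : Fin m} {k k' : Fin (n - 3)}
    (h : (j, k) ≠ (j', k')) :
    inner ℂ (gt2L m n j (k + 1)) (gt2L m n j' (k' + 1)) = 0 := by
  rw [gt2L_eq_tmul hmn, gt2L_eq_tmul hmn, inner_tmul, inner_smul_left, inner_smul_right,
    inner_single_left, PiLp.single_apply]
  by_cases hj : j = j'
  · subst hj
    have hkk : (k : ℕ) + 1 ≠ k' + 1 := fun e => h (by rw [Fin.ext (Nat.succ_injective e)])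
    have := k.isLt
    have := k'.isLt
    rw [inner_longTileVec (by omega) hmn j (by omega) (by omega), if_neg hkk]
    simp
  · rw [if_neg hj]
    simp

theorem inner_gt2F_gt2L (hmn : m ≤ n) (j : Fin m) (k : Fin (n - 3)) :
    inner ℂ (gt2F m n) (gt2L m n j (k + 1)) = 0 := by
  have := k.isLt
  rw [gt2F_eq_tmul, gt2L_eq_tmul hmn, inner_tmul, inner_smul_right,
    inner_ones_longTileVec (by omega) hmn j (Nat.succ_pos _) (by omega)]
  simp

theorem norm_gt2S (hm : 1 < m) (hmn : m ≤ n) (j : Fin m) : ‖gt2S m n j‖ = 1 := by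
  rw [gt2S_eq_tmul hmn, norm_tmul, norm_smul_sub_single (finRotate_ne_self hm j).symm]
  simp

theorem norm_gt2L (hmn : m ≤ n) (j : Fin m) (k : Fin (n - 3)) : ‖gt2L m n j (k + 1)‖ = 1 := by
  have := k.isLt
  rw [gt2L_eq_tmul hmn, norm_tmul, norm_smul_longTileVec (by omega) hmn j (by omega)]
  simp

theorem norm_gt2F (hm : 0 < m) (hn : 0 < n) : ‖gt2F m n‖ = 1 := by
  rw [EuclideanSpace.norm_eq]
  simp only [gt2F, norm_div, norm_one, Complex.norm_real, Real.norm_eq_abs,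
    abs_of_nonneg (Real.sqrt_nonneg _), div_pow, one_pow, Finset.sum_const, Finset.card_univ,
    Fintype.card_prod, Fintype.card_fin, nsmul_eq_mul]
  rw [Real.sq_sqrt (by positivity), Nat.cast_mul, mul_comm (m : ℝ),
    mul_one_div_cancel (by positivity), Real.sqrt_one]

theorem orthonormal_gt2 (hm : 1 < m) (hmn : m ≤ n) : Orthonormal ℂ (gt2 m n) := by
  refine ⟨?_, ?_⟩
  · rintro (j | ⟨j, k⟩ | _)
    · exact norm_gt2S hm hmn j
    · exact norm_gt2L hmn j k
    · exact norm_gt2F (by omega) (by omega)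
  · rintro (j | ⟨j, k⟩ | _) (j' | ⟨j', k'⟩ | _) h
    · exact inner_gt2S_gt2S hmn fun e => h (congrArg _ e)
    · exact inner_gt2S_gt2L hmn j j' _
    · exact inner_gt2S_gt2F hmn j
    · exact inner_eq_zero_symm.mp (inner_gt2S_gt2L hmn j' j _)
    · exact inner_gt2L_gt2L hmn fun e => h (congrArg _ (congrArg _ e))
    · exact inner_eq_zero_symm.mp (inner_gt2F_gt2L hmn j k)
    · exact inner_eq_zero_symm.mp (inner_gt2S_gt2F hmn j')
    · exact inner_gt2F_gt2L hmn j' k'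
    · exact absurd rfl h

end GenTiles2

theorem stmt14_general (m n : ℕ) (hm : 3 ≤ m) (hnm : m ≤ n) :
    (∀ s t : GT2Index m n, s ≠ t → (inner ℂ (gt2 m n s) (gt2 m n t) : ℂ) = 0) ∧
    (∀ s, ‖gt2 m n s‖ = 1) ∧
    Fintype.card (GT2Index m n) = m * n - 2 * m + 1 := by
  have hON := orthonormal_gt2 (by omega : 1 < m) hnm
  refine ⟨fun s t hst => hON.2 hst, hON.1, ?_⟩
  simp only [Fintype.card_sum, Fintype.card_prod, Fintype.card_fin, Fintype.card_unit]
  have : m * (n - 3) + m * 3 = m * n := by rw [← Nat.mul_add, Nat.sub_add_cancel (by omega)]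
  omega

/-- GenTiles2: for m ≥ 3, n ≥ 4, n ≥ m, the mn − 2m + 1 states above are mutually
orthogonal unit product vectors in ℂᵐ ⊗ ℂⁿ. -/
theorem stmt14 (m n : ℕ) (hm : 3 ≤ m) (hn : 4 ≤ n) (hnm : m ≤ n) :
    (∀ s t : GT2Index m n, s ≠ t → (inner ℂ (gt2 m n s) (gt2 m n t) : ℂ) = 0) ∧
    (∀ s, ‖gt2 m n s‖ = 1) ∧
    Fintype.card (GT2Index m n) = m * n - 2 * m + 1 :=
  stmt14_general m n hm hnm
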